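/- Let n be an integer with n ≡ 2 (mod 4) and n ≥ 2, and let m be an integer with m ≥ 3n + 1. Then C(n, m) is the full symmetric group S_m; equivalently, every adjacent transposition (i, i+1), for 1 ≤ i ≤ m − 1, is a product of n-crossing permutations over S_m. -/

import Mathlib

/-- The underlying function of the `n`-crossing permutation `π_j` over `{1, …, m}` (as a
function on `ℕ`): it sends `j + k` to `j + n - 1 - k` for `0 ≤ k ≤ n - 1` and fixes all
other points. -/
def crossFun (n j i : ℕ) : ℕ :=
  if j ≤ i ∧ i < j + n then 2 * j + n - 1 - i else i

lemma crossFun_involutive (n j : ℕ) : Function.Involutive (crossFun n j) := by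
  intro i
  unfold crossFun
  split_ifs <;> omega

/-- The `n`-crossing permutation `π_j`, viewed as a permutation of `ℕ` fixing every point
outside `{j, …, j + n - 1}`. -/
def crossPerm (n j : ℕ) : Equiv.Perm ℕ :=
  Function.Involutive.toPerm _ (crossFun_involutive n j)

/-- `C n m` is the subgroup of the symmetric group `S_m` (realized as permutations of `ℕ`
supported on `{1, …, m}`) generated by the `n`-crossing permutations `π_1, …, π_{m-n+1}`. -/
def C (n m : ℕ) : Subgroup (Equiv.Perm ℕ) :=
  Subgroup.closure {σ | ∃ j, 1 ≤ j ∧ j ≤ m - n + 1 ∧ σ = crossPerm n j}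

/-! For even `n ≥ 4`, the word `π_{j+1} π_{j+2} π_{j+1} π_j` is a 3-cycle, which four
reflections conjugate onto three consecutive points; conjugation by `π_{l+1} π_l`, a translation
by 2 on most of its window, then carries it to every position, so `C(n, m)` contains every
3-cycle `(x, x+1, x+2)`. These give the nested double transpositions `(a, b+1)(a+1, b)`, and
peeling such pairs off `π_j`, which reverses `n = 4t + 2` points, leaves the transposition of
its two middle points. Translating by 2 again yields every adjacent transposition, and these
generate all permutations supported in `{1, …, m}`. -/

open Equiv Equiv.Perm

lemma forall_of_iff_add_two {P : ℕ → Prop} {lo hi a : ℕ}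
    (hstep : ∀ x, lo ≤ x → x + 2 ≤ hi → (P x ↔ P (x + 2)))
    (ha : lo ≤ a) (ha' : a + 1 ≤ hi) (h₀ : P a) (h₁ : P (a + 1)) :
    ∀ x, lo ≤ x → x ≤ hi → P x := by
  have hshift : ∀ k x, lo ≤ x → x + 2 * k ≤ hi → (P x ↔ P (x + 2 * k)) := by
    intro k
    induction k with
    | zero => simp
    | succ k ih =>
      intro x hx hxk
      rw [hstep x hx (by omega), ih (x + 2) (by omega) (by omega),
        show x + 2 + 2 * k = x + 2 * (k + 1) by ring]
  intro x hx hxh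
  obtain ⟨b, hb, hb', hPb, hxb⟩ : ∃ b, lo ≤ b ∧ b ≤ hi ∧ P b ∧ x % 2 = b % 2 := by
    by_cases h : x % 2 = a % 2
    · exact ⟨a, ha, by omega, h₀, h⟩
    · exact ⟨a + 1, by omega, ha', h₁, by omega⟩
  rcases le_total x b with hle | hle
  · have := hshift ((b - x) / 2) x hx (by omega)
    rw [show x + 2 * ((b - x) / 2) = b by omega] at this
    exact this.2 hPb
  · have := hshift ((x - b) / 2) b hb (by omega)
    rw [show b + 2 * ((x - b) / 2) = x by omega] at this
    exact this.1 hPb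

lemma Subgroup.conj_mem_iff_of_mem {G : Type*} [Group G] (H : Subgroup G) {g : G} (hg : g ∈ H)
    (x : G) : g * x * g⁻¹ ∈ H ↔ x ∈ H := by
  rw [H.mul_mem_cancel_right (inv_mem hg), H.mul_mem_cancel_left hg]

section ThreeCycles

variable {α : Type*} [DecidableEq α]

-- `a ↦ b ↦ c ↦ a`
def cycle3 (a b c : α) : Perm α := swap a c * swap a b

lemma cycle3_conj (g : Perm α) (a b c : α) :
    g * cycle3 a b c * g⁻¹ = cycle3 (g a) (g b) (g c) := by
  simp only [cycle3, swap_apply_apply]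
  group

lemma cycle3_inv (a b c : α) : (cycle3 a b c)⁻¹ = cycle3 a c b := by
  simp only [cycle3, mul_inv_rev, swap_inv]

lemma cycle3_apply {a b c : α} (hab : a ≠ b) (hac : a ≠ c) (hbc : b ≠ c) (x : α) :
    cycle3 a b c x = if x = a then b else if x = b then c else if x = c then a else x := by
  simp only [cycle3, Perm.mul_apply, swap_apply_def]
  split_ifs <;> simp_all

lemma swap_mul_swap_conj (g : Perm α) (p q r s : α) :
    g * (swap p q * swap r s) * g⁻¹ = swap (g p) (g q) * swap (g r) (g s) := by
  rw [swap_apply_apply, swap_apply_apply]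
  group

end ThreeCycles

lemma crossPerm_apply (n j i : ℕ) :
    crossPerm n j i = if j ≤ i ∧ i < j + n then 2 * j + n - 1 - i else i := rfl

lemma crossPerm_two (j : ℕ) : crossPerm 2 j = swap j (j + 1) := by
  ext i
  simp only [crossPerm_apply, swap_apply_def]
  split_ifs <;> omega

lemma crossPerm_add_four (w j : ℕ) :
    crossPerm (w + 4) j =
      swap j (j + w + 3) * swap (j + 1) (j + w + 2) * crossPerm w (j + 2) := by
  ext i
  simp only [Perm.mul_apply, crossPerm_apply, swap_apply_def]
  split_ifs <;> omega

lemma crossPerm_succ_mul_crossPerm_apply {n l x : ℕ} (hlx : l ≤ x) (hx : x + 2 ≤ l + n) :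
    (crossPerm n (l + 1) * crossPerm n l) x = x + 2 := by
  simp only [Perm.mul_apply, crossPerm_apply]
  split_ifs <;> omega

section CrossingGroup

variable {n m : ℕ}

lemma crossPerm_mem_C {j : ℕ} (hj : 1 ≤ j) (hjm : j + n ≤ m + 1) : crossPerm n j ∈ C n m :=
  Subgroup.subset_closure ⟨j, hj, by omega, rfl⟩

lemma exists_mem_C_shift_two {k x : ℕ} (hk : k + 2 ≤ n) (hnm : n + 1 ≤ m) (hx : 1 ≤ x)
    (hxm : x + k + 2 ≤ m) : ∃ g ∈ C n m, ∀ i ≤ k, g (x + i) = x + i + 2 :=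
  ⟨_, mul_mem (crossPerm_mem_C (j := max 1 (x + k + 2 - n) + 1) (by omega) (by omega))
    (crossPerm_mem_C (by omega) (by omega)),
    fun _ _ => crossPerm_succ_mul_crossPerm_apply (by omega) (by omega)⟩

lemma forall_mem_C_of_shift_two {k : ℕ} {F : ℕ → Perm ℕ}
    (hF : ∀ x (g : Perm ℕ), (∀ i ≤ k, g (x + i) = x + i + 2) →
      g * F x * g⁻¹ = F (x + 2))
    (hk : k + 2 ≤ n) (hnm : n + 1 ≤ m) {a : ℕ} (ha : 1 ≤ a) (ha' : a + k + 1 ≤ m)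
    (h₀ : F a ∈ C n m) (h₁ : F (a + 1) ∈ C n m) :
    ∀ x, 1 ≤ x → x + k ≤ m → F x ∈ C n m := by
  intro x hx hxm
  refine forall_of_iff_add_two (P := (F · ∈ C n m)) (hi := m - k) (fun y hy hym => ?_)
    ha (by omega) h₀ h₁ x hx (by omega)
  obtain ⟨g, hg, hgy⟩ := exists_mem_C_shift_two hk hnm hy (by omega)
  rw [← hF y g hgy, Subgroup.conj_mem_iff_of_mem _ hg]

lemma crossPerm_word_eq_cycle3 (hn : 0 < n) (j : ℕ) :
    crossPerm n (j + 1) * crossPerm n (j + 2) * crossPerm n (j + 1) * crossPerm n j =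
      cycle3 (j + n + 1) (j + n - 1) j := by
  ext i
  simp only [Perm.mul_apply, crossPerm_apply, cycle3, swap_apply_def]
  split_ifs <;> omega

lemma cycle3_mem_C (hn : Even n) (hn4 : 4 ≤ n) {j : ℕ} (hj : 1 ≤ j)
    (hjm : 3 * n + 2 * j ≤ 2 * m) :
    cycle3 (j + n) (j + n + 1) (j + n + 2) ∈ C n m := by
  have hn2 : n % 2 = 0 := Nat.even_iff.1 hn
  have hw : cycle3 (j + n + 1) (j + n - 1) j ∈ C n m := by
    rw [← crossPerm_word_eq_cycle3 (by omega)]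
    refine mul_mem (mul_mem (mul_mem ?_ ?_) ?_) ?_ <;>
      exact crossPerm_mem_C (by omega) (by omega)
  set g := crossPerm n (j + 1) * crossPerm n (n / 2 + j + 1) * crossPerm n j *
    crossPerm n (n / 2 + j)
  have hg : g ∈ C n m := by
    refine mul_mem (mul_mem (mul_mem ?_ ?_) ?_) ?_ <;>
      exact crossPerm_mem_C (by omega) (by omega)
  have hg₁ : g (j + n + 1) = j + n := by
    simp only [g, Perm.mul_apply, crossPerm_apply]; split_ifs <;> omega
  have hg₂ : g (j + n - 1) = j + n + 1 := by
    simp only [g, Perm.mul_apply, crossPerm_apply]; split_ifs <;> omega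
  have hg₃ : g j = j + n + 2 := by
    simp only [g, Perm.mul_apply, crossPerm_apply]; split_ifs <;> omega
  have hconj := mul_mem (mul_mem hg hw) (inv_mem hg)
  rwa [cycle3_conj, hg₁, hg₂, hg₃] at hconj

lemma cycle3_adjacent_mem_C (hn : Even n) (hn4 : 4 ≤ n) (hm : 3 * n + 4 ≤ 2 * m) :
    ∀ x, 1 ≤ x → x + 2 ≤ m → cycle3 x (x + 1) (x + 2) ∈ C n m := by
  refine forall_mem_C_of_shift_two (k := 2) (fun x g hg => ?_) hn4 (by omega) (a := n + 1)
    (by omega) (by omega) ?_ ?_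
  · rw [cycle3_conj, show g x = x + 2 from hg 0 (by omega), hg 1 (by omega), hg 2 le_rfl]
  · simpa only [add_comm 1 n] using cycle3_mem_C hn hn4 le_rfl (by omega)
  · simpa only [add_comm 2 n] using cycle3_mem_C hn hn4 (j := 2) (by omega) (by omega)

end CrossingGroup

lemma swap_mul_swap_eq_cycle3_mul (a : ℕ) :
    swap a (a + 3) * swap (a + 1) (a + 2) =
      cycle3 a (a + 1) (a + 2) * (cycle3 (a + 1) (a + 2) (a + 3))⁻¹ *
        cycle3 a (a + 1) (a + 2) := by
  have hu : ∀ x, (cycle3 (a + 1) (a + 3) (a + 2) * cycle3 a (a + 1) (a + 2)) x =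
      if x = a then a + 3 else if x = a + 2 then a else if x = a + 3 then a + 2 else x := by
    intro x
    simp (disch := omega) only [Perm.mul_apply, cycle3_apply]
    split_ifs <;> omega
  ext i
  rw [cycle3_inv, mul_assoc, Perm.mul_apply (cycle3 a (a + 1) (a + 2)), hu,
    cycle3_apply (by omega) (by omega) (by omega)]
  simp only [Perm.mul_apply, swap_apply_def]
  split_ifs <;> omega

section AdjacentThreeCycles

variable {H : Subgroup (Perm ℕ)} {m : ℕ}

lemma swap_mul_swap_nested_mem
    (h3 : ∀ x, 1 ≤ x → x + 2 ≤ m → cycle3 x (x + 1) (x + 2) ∈ H) :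
    ∀ d a, 1 ≤ a → a + 2 * d + 3 ≤ m →
      swap a (a + 2 * d + 3) * swap (a + 1) (a + 2 * d + 2) ∈ H := by
  intro d
  induction d with
  | zero =>
    intro a ha ham
    rw [swap_mul_swap_eq_cycle3_mul]
    exact mul_mem (mul_mem (h3 a ha (by omega)) (inv_mem (h3 (a + 1) (by omega) (by omega))))
      (h3 a ha (by omega))
  | succ d ih =>
    intro a ha ham
    set g := cycle3 a (a + 2) (a + 1) * cycle3 (a + 2 * d + 3) (a + 2 * d + 4) (a + 2 * d + 5)
    have hg : g ∈ H :=
      mul_mem (cycle3_inv a (a + 1) (a + 2) ▸ inv_mem (h3 a ha (by omega)))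
        (h3 (a + 2 * d + 3) (by omega) (by omega))
    have hconj := mul_mem (mul_mem hg (ih (a + 1) (by omega) (by omega))) (inv_mem hg)
    have hg₁ : g (a + 1) = a := by
      simp (disch := omega) only [g, Perm.mul_apply, cycle3_apply]; split_ifs <;> omega
    have hg₂ : g (a + 1 + 2 * d + 3) = a + 2 * (d + 1) + 3 := by
      simp (disch := omega) only [g, Perm.mul_apply, cycle3_apply]; split_ifs <;> omega
    have hg₃ : g (a + 1 + 1) = a + 1 := by
      simp (disch := omega) only [g, Perm.mul_apply, cycle3_apply]; split_ifs <;> omega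
    have hg₄ : g (a + 1 + 2 * d + 2) = a + 2 * (d + 1) + 2 := by
      simp (disch := omega) only [g, Perm.mul_apply, cycle3_apply]; split_ifs <;> omega
    rwa [swap_mul_swap_conj, hg₁, hg₂, hg₃, hg₄] at hconj

lemma swap_mem_of_crossPerm_mem
    (h3 : ∀ x, 1 ≤ x → x + 2 ≤ m → cycle3 x (x + 1) (x + 2) ∈ H) :
    ∀ t j, 1 ≤ j → j + 4 * t + 2 ≤ m + 1 → crossPerm (4 * t + 2) j ∈ H →
      swap (j + 2 * t) (j + 2 * t + 1) ∈ H := by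
  intro t
  induction t with
  | zero => intro j _ _ h; simpa [crossPerm_two] using h
  | succ t ih =>
    intro j hj hjm h
    rw [show 4 * (t + 1) + 2 = 2 * (2 * t + 1) + 4 by ring, crossPerm_add_four,
      H.mul_mem_cancel_left (swap_mul_swap_nested_mem h3 (2 * t + 1) j hj (by omega)),
      show 2 * (2 * t + 1) = 4 * t + 2 by ring] at h
    simpa only [show j + 2 + 2 * t = j + 2 * (t + 1) by ring] using
      ih (j + 2) (by omega) (by omega) h

end AdjacentThreeCycles

lemma swap_adjacent_mem_C {n m : ℕ} (hn : n % 4 = 2) (hm : 3 * n + 4 ≤ 2 * m) :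
    ∀ i, 1 ≤ i → i + 1 ≤ m → swap i (i + 1) ∈ C n m := by
  obtain ⟨t, rfl⟩ : ∃ t, n = 4 * t + 2 := ⟨n / 4, by omega⟩
  rcases Nat.eq_zero_or_pos t with rfl | ht
  · exact fun i hi him => crossPerm_two i ▸ crossPerm_mem_C hi (by omega)
  have h3 := cycle3_adjacent_mem_C ⟨2 * t + 1, by ring⟩ (by omega) hm
  have hseed : ∀ j, 1 ≤ j → j ≤ 2 →
      swap (j + 2 * t) (j + 2 * t + 1) ∈ C (4 * t + 2) m :=
    fun j hj hj2 => swap_mem_of_crossPerm_mem h3 t j hj (by omega) (crossPerm_mem_C hj (by omega))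
  refine forall_mem_C_of_shift_two (k := 1) (fun x g hg => ?_) (by omega) (by omega)
    (a := 1 + 2 * t) (by omega) (by omega) (hseed 1 le_rfl (by omega)) ?_
  · rw [← swap_apply_apply, show g x = x + 2 from hg 0 (by omega), hg 1 le_rfl]
  · simpa only [show 2 + 2 * t = 1 + 2 * t + 1 by ring] using hseed 2 (by omega) le_rfl

lemma C_le_fixingSubgroup {n m : ℕ} (hnm : n ≤ m) :
    C n m ≤ fixingSubgroup (Perm ℕ) (Set.Icc 1 m)ᶜ := by
  refine (Subgroup.closure_le _).2 ?_
  rintro _ ⟨j, hj, hjm, rfl⟩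
  refine (mem_fixingSubgroup_iff _).2 fun i hi => ?_
  simp only [Set.mem_compl_iff, Set.mem_Icc] at hi
  rw [Perm.smul_def, crossPerm_apply, if_neg (by omega)]

lemma mem_closure_swap_adjacent {m : ℕ} {σ : Perm ℕ}
    (hσ : ∀ i, σ i ≠ i → 1 ≤ i ∧ i ≤ m) :
    σ ∈ Subgroup.closure {τ | ∃ i, 1 ≤ i ∧ i + 1 ≤ m ∧ τ = swap i (i + 1)} := by
  set S := {τ : Perm ℕ | ∃ i, 1 ≤ i ∧ i + 1 ≤ m ∧ τ = swap i (i + 1)}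
  have hS : ∀ τ ∈ S, τ.IsSwap := by
    rintro _ ⟨i, -, -, rfl⟩
    exact ⟨i, i + 1, by omega, rfl⟩
  have horbit : ∀ x, 1 ≤ x → x ≤ m → x ∈ MulAction.orbit (Subgroup.closure S) 1 := by
    intro x hx hxm
    induction x, hx using Nat.le_induction with
    | base => exact MulAction.mem_orbit_self 1
    | succ x hx ih =>
      have hmem : swap x (x + 1) ∈ Subgroup.closure S :=
        Subgroup.subset_closure ⟨x, hx, hxm, rfl⟩
      simpa using MulAction.mem_orbit_of_mem_orbit ⟨_, hmem⟩ (ih (by omega))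
  refine (mem_closure_isSwap hS).2
    ⟨(Set.finite_Icc 1 m).subset fun i hi => hσ i hi, fun x => ?_⟩
  by_cases hx : σ x = x
  · rw [hx]
    exact MulAction.mem_orbit_self x
  · have hσx : σ (σ x) ≠ σ x := fun h => hx (σ.injective h)
    rw [MulAction.orbit_eq_iff.2 (horbit x (hσ x hx).1 (hσ x hx).2)]
    exact horbit _ (hσ _ hσx).1 (hσ _ hσx).2

theorem stmt5_general (n : ℕ) (hn : n % 4 = 2)
    (m : ℕ) (hm : 3 * n + 1 ≤ m) :
    (∀ σ : Equiv.Perm ℕ, σ ∈ C n m ↔ (∀ i, σ i ≠ i → 1 ≤ i ∧ i ≤ m)) ∧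
    (∀ i, 1 ≤ i → i + 1 ≤ m → Equiv.swap i (i + 1) ∈ C n m) := by
  have hswap := swap_adjacent_mem_C hn (m := m) (by omega)
  refine ⟨fun σ => ⟨fun hσ i hi => ?_, fun hσ => ?_⟩, hswap⟩
  · by_contra hout
    exact hi ((mem_fixingSubgroup_iff _).1 (C_le_fixingSubgroup (by omega) hσ) i hout)
  · refine (Subgroup.closure_le _).2 ?_ (mem_closure_swap_adjacent hσ)
    rintro _ ⟨i, hi, him, rfl⟩
    exact hswap i hi him

theorem stmt5 (n : ℕ) (hn : n % 4 = 2) (hn2 : 2 ≤ n)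
    (m : ℕ) (hm : 3 * n + 1 ≤ m) :
    (∀ σ : Equiv.Perm ℕ, σ ∈ C n m ↔ (∀ i, σ i ≠ i → 1 ≤ i ∧ i ≤ m)) ∧
    (∀ i, 1 ≤ i → i + 1 ≤ m → Equiv.swap i (i + 1) ∈ C n m) :=
  stmt5_general n hn m hm
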